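/- arXiv:1703.05125 — 6 statements merged into one kernel-verified Lean document; each statement's English description precedes it below -/
import Mathlib

section
/- The rational function f(x) = x^3(x+6)^3(x^2-6x+36)^3 / ((x-3)^3(x^2+3x+9)^3) over ℚ satisfies both f = g1 ∘ g2 ∘ g3 with g1(x) = x^3, g2(x) = x(x-12)/(x-3), g3(x) = x(x+6)/(x-3), and f = h1 ∘ h2 with h1(x) = x^3(x+24)/(x-3), h2(x) = x(x^2-6x+36)/(x^2+3x+9). -/
/-!
Write `q = x² + 3x + 9`. With `g₃ = x(x+6)/(x-3)` one has `g₃ - 3 = q/(x-3)` and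
`g₃ - 12 = (x² - 6x + 36)/(x-3)`, so `g₂ ∘ g₃ = x(x+6)(x² - 6x + 36)/((x-3)q)`, whose cube is `f`.
With `h₂ = x(x² - 6x + 36)/q` one has `h₂ + 24 = (x+6)³/q` and `h₂ - 3 = (x-3)³/q`, and
substituting these into `h₁` gives `f` again. All of this holds in any field in which `x - 3` and
`q` do not vanish, which is the case for the transcendental `X ∈ ℚ(X)`.
-/

open Polynomial

namespace GutierrezSevilla

variable {K : Type*} [Field K]

section Identities

variable {x : K}

lemma g₃_sub_three (hx : x - 3 ≠ 0) :
    x * (x + 6) / (x - 3) - 3 = (x ^ 2 + 3 * x + 9) / (x - 3) := by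
  rw [div_sub' hx, div_left_inj' hx]
  ring

lemma g₃_sub_twelve (hx : x - 3 ≠ 0) :
    x * (x + 6) / (x - 3) - 12 = (x ^ 2 - 6 * x + 36) / (x - 3) := by
  rw [div_sub' hx, div_left_inj' hx]
  ring

lemma h₂_add_twentyFour (hq : x ^ 2 + 3 * x + 9 ≠ 0) :
    x * (x ^ 2 - 6 * x + 36) / (x ^ 2 + 3 * x + 9) + 24 = (x + 6) ^ 3 / (x ^ 2 + 3 * x + 9) := by
  rw [div_add' _ _ _ hq, div_left_inj' hq]
  ring

lemma h₂_sub_three (hq : x ^ 2 + 3 * x + 9 ≠ 0) :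
    x * (x ^ 2 - 6 * x + 36) / (x ^ 2 + 3 * x + 9) - 3 = (x - 3) ^ 3 / (x ^ 2 + 3 * x + 9) := by
  rw [div_sub' hq, div_left_inj' hq]
  ring

end Identities

lemma X_sub_three_ne_zero : (RatFunc.X - 3 : RatFunc K) ≠ 0 := fun h =>
  RatFunc.transcendental_X ⟨(X - C 3 : K[X]), X_sub_C_ne_zero 3, by simpa [map_ofNat] using h⟩

lemma X_sq_add_three_mul_X_add_nine_ne_zero :
    (RatFunc.X ^ 2 + 3 * RatFunc.X + 9 : RatFunc K) ≠ 0 := fun h =>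
  RatFunc.transcendental_X ⟨(X ^ 2 + C 3 * X + C 9 : K[X]),
    fun h0 => by simpa using congrArg (coeff · 2) h0, by simpa [map_ofNat] using h⟩

end GutierrezSevilla

open GutierrezSevilla in
/-- Gutierrez–Sevilla example: the rational function
f = x^3(x+6)^3(x^2-6x+36)^3 / ((x-3)^3(x^2+3x+9)^3) over ℚ has the two decompositions
f = g1 ∘ g2 ∘ g3 and f = h1 ∘ h2. -/
theorem stmt_1 :
    let x : RatFunc ℚ := RatFunc.X
    let f : RatFunc ℚ :=
      (x ^ 3 * (x + 6) ^ 3 * (x ^ 2 - 6 * x + 36) ^ 3) /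
        ((x - 3) ^ 3 * (x ^ 2 + 3 * x + 9) ^ 3)
    let g1 : RatFunc ℚ → RatFunc ℚ := fun t => t ^ 3
    let g2 : RatFunc ℚ → RatFunc ℚ := fun t => t * (t - 12) / (t - 3)
    let g3 : RatFunc ℚ := x * (x + 6) / (x - 3)
    let h1 : RatFunc ℚ → RatFunc ℚ := fun t => t ^ 3 * (t + 24) / (t - 3)
    let h2 : RatFunc ℚ := x * (x ^ 2 - 6 * x + 36) / (x ^ 2 + 3 * x + 9)
    f = g1 (g2 g3) ∧ f = h1 h2 := by
  have hx := X_sub_three_ne_zero (K := ℚ)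
  have hq := X_sq_add_three_mul_X_add_nine_ne_zero (K := ℚ)
  dsimp only
  constructor
  · rw [g₃_sub_twelve hx, g₃_sub_three hx]
    field_simp
  · rw [h₂_add_twentyFour hq, h₂_sub_three hq]
    field_simp
end

section
/- Let k be a field of characteristic zero, let α1, α2, α3, α4 ∈ k be pairwise distinct, and let β1, β2, β3 ∈ k with l3, l4 ≥ 1 and l1, l2 ≥ 2 integers. Then there is no polynomial h ∈ k[x] satisfying simultaneously h(x) = β1 + (x-α1)^{l1}, h(x) = β2 + (x-α2)^{l2}, and h(x) = β3 + (x-α3)^{l3}(x-α4)^{l4}. -/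
open Polynomial

/-- No polynomial h simultaneously equals β1+(x-α1)^{l1}, β2+(x-α2)^{l2}
and β3+(x-α3)^{l3}(x-α4)^{l4} for pairwise distinct α's, with l1,l2 ≥ 2, l3,l4 ≥ 1. -/
theorem stmt_5 (k : Type*) [Field k] [CharZero k] (α1 α2 α3 α4 β1 β2 β3 : k)
    (h12 : α1 ≠ α2) (h13 : α1 ≠ α3) (h14 : α1 ≠ α4)
    (h23 : α2 ≠ α3) (h24 : α2 ≠ α4) (h34 : α3 ≠ α4)
    (l1 l2 l3 l4 : ℕ) (hl1 : 2 ≤ l1) (hl2 : 2 ≤ l2) (hl3 : 1 ≤ l3) (hl4 : 1 ≤ l4) :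
    ¬ ∃ h : Polynomial k,
        h = C β1 + (X - C α1) ^ l1 ∧
        h = C β2 + (X - C α2) ^ l2 ∧
        h = C β3 + (X - C α3) ^ l3 * (X - C α4) ^ l4 := by
  rintro ⟨h, h1, h2, -⟩
  have key := congrArg (fun p => (derivative p).eval α1) (h1.symm.trans h2)
  simp only [derivative_add, derivative_C, derivative_pow, derivative_sub,
    derivative_X, sub_zero, mul_one, zero_add, eval_mul, eval_pow, eval_sub,
    eval_X, eval_C, eval_natCast, sub_self] at key
  have hz : (0 : k) ^ (l1 - 1) = 0 := zero_pow (by omega)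
  rw [hz, mul_zero] at key
  have h2' : (l2 : k) ≠ 0 := Nat.cast_ne_zero.mpr (by omega)
  have h3' : (α1 - α2) ^ (l2 - 1) ≠ 0 := pow_ne_zero _ (sub_ne_zero.mpr h12)
  exact (mul_ne_zero h2' h3') key.symm
end

section
/- Let α0, d ∈ ℚ (or any field of characteristic zero) with d ≠ 0, and β1 ∈ ℚ. Then the rational function f(x) = (x-α0-2d)^2 (x-α0)^2 / (x-α0-d)^2 satisfies f = g ∘ h, where h(x) = β1 + (x-α0)^2/(x-α0-d) and g(x) = (x-β1)(x-β1-4d). -/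
open RatFunc

/-- The numerator identity `u² - 4d(u - d) = (u - 2d)²`, divided by `(u - d)²`; when `u = d`
both sides are junk zeros. -/
theorem sq_div_sub_mul_sq_div_sub_sub {F : Type*} [Field F] (u d : F) :
    u ^ 2 / (u - d) * (u ^ 2 / (u - d) - 4 * d) = (u - 2 * d) ^ 2 * u ^ 2 / (u - d) ^ 2 := by
  by_cases hv : u - d = 0
  · simp [hv]
  · field_simp
    ring

theorem stmt_11_general (k : Type*) [Field k] (α0 d β1 : k) :
    let x : RatFunc k := RatFunc.X
    let h : RatFunc k := RatFunc.C β1 + (x - RatFunc.C α0) ^ 2 / (x - RatFunc.C α0 - RatFunc.C d)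
    let g : RatFunc k → RatFunc k := fun t => (t - RatFunc.C β1) * (t - RatFunc.C β1 - RatFunc.C (4 * d))
    g h = (x - RatFunc.C (α0 + 2 * d)) ^ 2 * (x - RatFunc.C α0) ^ 2 /
        (x - RatFunc.C (α0 + d)) ^ 2 := by
  intro x h g
  have key := sq_div_sub_mul_sq_div_sub_sub (x - C α0) (C d)
  simp only [g, h, add_sub_cancel_left, map_add, map_mul, map_ofNat]
  convert key using 2 <;> ring

/-- f(x) = (x-α0-2d)²(x-α0)²/(x-α0-d)² decomposes as g ∘ h with
h(x) = β1 + (x-α0)²/(x-α0-d) and g(x) = (x-β1)(x-β1-4d), for d ≠ 0. -/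
theorem stmt_11 (k : Type*) [Field k] [CharZero k] (α0 d β1 : k) (hd : d ≠ 0) :
    let x : RatFunc k := RatFunc.X
    let h : RatFunc k := RatFunc.C β1 + (x - RatFunc.C α0) ^ 2 / (x - RatFunc.C α0 - RatFunc.C d)
    let g : RatFunc k → RatFunc k := fun t => (t - RatFunc.C β1) * (t - RatFunc.C β1 - RatFunc.C (4 * d))
    g h = (x - RatFunc.C (α0 + 2 * d)) ^ 2 * (x - RatFunc.C α0) ^ 2 /
        (x - RatFunc.C (α0 + d)) ^ 2 :=
  stmt_11_general k α0 d β1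
end

section
/- Let k be a field of characteristic zero, α4, β1 ∈ k. Then the rational function f(x) = (x-α4)(x-α4+1/4)^2/(x-α4-1/4)^4 satisfies f = g ∘ h, where h(x) = β1 + (x-α4+1/4)^2/(x-α4-1/4)^2 and g(x) = (x-β1)(x-β1-1). -/
/-- f(x) = (x-α4)(x-α4+1/4)²/(x-α4-1/4)⁴ decomposes as g ∘ h with
h(x) = β1 + (x-α4+1/4)²/(x-α4-1/4)² and g(x) = (x-β1)(x-β1-1). -/
theorem stmt_12 (k : Type*) [Field k] [CharZero k] (α4 β1 : k) :
    let x : RatFunc k := RatFunc.X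
    let h : RatFunc k := RatFunc.C β1 +
      (x - RatFunc.C (α4 - 1/4)) ^ 2 / (x - RatFunc.C (α4 + 1/4)) ^ 2
    let g : RatFunc k → RatFunc k := fun t => (t - RatFunc.C β1) * (t - RatFunc.C β1 - 1)
    g h = (x - RatFunc.C α4) * (x - RatFunc.C (α4 - 1/4)) ^ 2 /
        (x - RatFunc.C (α4 + 1/4)) ^ 4 := by
  intro x h g
  have hB : x - RatFunc.C (α4 + 1/4) ≠ 0 := by
    intro hc
    rw [sub_eq_zero] at hc
    have hnum : (RatFunc.X : RatFunc k).num = (RatFunc.C (α4 + 1/4)).num :=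
      congrArg RatFunc.num hc
    rw [RatFunc.num_X, RatFunc.num_C] at hnum
    exact Polynomial.X_ne_C _ hnum
  have h1 : RatFunc.C (α4 - 1/4) = RatFunc.C α4 - RatFunc.C ((1:k)/4) := map_sub _ _ _
  have h2 : RatFunc.C (α4 + 1/4) = RatFunc.C α4 + RatFunc.C ((1:k)/4) := map_add _ _ _
  have h3 : (RatFunc.C ((1:k)/4)) * 4 = 1 := by
    rw [← map_ofNat (RatFunc.C : k →+* RatFunc k) 4, ← map_mul]
    norm_num
  have key : (x - RatFunc.C (α4 - 1/4)) ^ 2 - (x - RatFunc.C (α4 + 1/4)) ^ 2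
      = x - RatFunc.C α4 := by
    rw [h1, h2]
    linear_combination (x - RatFunc.C α4) * h3
  show (h - RatFunc.C β1) * (h - RatFunc.C β1 - 1) = _
  have hh : h - RatFunc.C β1
      = (x - RatFunc.C (α4 - 1/4)) ^ 2 / (x - RatFunc.C (α4 + 1/4)) ^ 2 := by
    simp only [h]; ring
  rw [hh, div_sub_one (pow_ne_zero 2 hB), key, div_mul_div_comm,
    show (x - RatFunc.C (α4 + 1/4)) ^ 2 * (x - RatFunc.C (α4 + 1/4)) ^ 2
      = (x - RatFunc.C (α4 + 1/4)) ^ 4 by ring,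
    mul_comm ((x - RatFunc.C (α4 - 1/4)) ^ 2) (x - RatFunc.C α4)]
end

section
/- Let k be a field of characteristic zero and α1, α2, β1 ∈ k, and k1, k2 positive integers. Then (x-α1)^{2k1}(x-α2)^{k1} · (x - (α1+2α2)/3)^{2k2} (x - (4α1-α2)/3)^{k2} = g(h(x)), where h(x) = β1 + (x-α1)^2(x-α2) and g(x) = (x-β1)^{k1} (x - β1 - (4/27)(α1-α2)^3)^{k2}. -/
open Polynomial

/-- Case (l1,l2,l3,l4) = (2,1,2,1): with h(x) = β1 + (x-α1)²(x-α2) and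
g(x) = (x-β1)^{k1}(x-β1-(4/27)(α1-α2)³)^{k2}, one has
(x-α1)^{2k1}(x-α2)^{k1}(x-(α1+2α2)/3)^{2k2}(x-(4α1-α2)/3)^{k2} = g(h(x)). -/
theorem stmt_14 (k : Type*) [Field k] [CharZero k] (α1 α2 β1 : k)
    (k1 k2 : ℕ) (hk1 : 0 < k1) (hk2 : 0 < k2) :
    let x : Polynomial k := X
    let h : Polynomial k := C β1 + (x - C α1) ^ 2 * (x - C α2)
    (x - C α1) ^ (2 * k1) * (x - C α2) ^ k1 *
        (x - C ((α1 + 2 * α2) / 3)) ^ (2 * k2) * (x - C ((4 * α1 - α2) / 3)) ^ k2 =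
      (h - C β1) ^ k1 * (h - C β1 - C ((4 / 27) * (α1 - α2) ^ 3)) ^ k2 := by
  intro x h
  have hh : h = C β1 + (x - C α1) ^ 2 * (x - C α2) := rfl
  have hu : (3 : Polynomial k) * C ((α1 + 2 * α2) / 3) = C α1 + 2 * C α2 := by
    rw [show (3 : Polynomial k) = C (3:k) from (map_ofNat C 3).symm, ← C_mul,
      mul_div_cancel₀ _ (by norm_num : (3:k) ≠ 0)]
    simp only [C_add, C_mul, map_ofNat]
  have hv : (3 : Polynomial k) * C ((4 * α1 - α2) / 3) = 4 * C α1 - C α2 := by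
    rw [show (3 : Polynomial k) = C (3:k) from (map_ofNat C 3).symm, ← C_mul,
      mul_div_cancel₀ _ (by norm_num : (3:k) ≠ 0)]
    simp only [C_sub, C_mul, map_ofNat]
  have hw : (27 : Polynomial k) * C ((4 / 27) * (α1 - α2) ^ 3) = 4 * (C α1 - C α2) ^ 3 := by
    rw [show (27 : Polynomial k) = C (27:k) from (map_ofNat C 27).symm, ← C_mul]
    have : (27:k) * ((4 / 27) * (α1 - α2) ^ 3) = 4 * (α1 - α2) ^ 3 := by ring
    rw [this, C_mul, map_ofNat, C_pow, C_sub]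
  have h27 : ((27 : Polynomial k)) ≠ 0 := by
    intro hcon
    have := congrArg (fun p => p.coeff 0) hcon
    simp at this
  have key : (x - C ((α1 + 2 * α2) / 3)) ^ 2 * (x - C ((4 * α1 - α2) / 3)) =
      (x - C α1) ^ 2 * (x - C α2) - C ((4 / 27) * (α1 - α2) ^ 3) := by
    apply mul_left_cancel₀ h27
    calc (27 : Polynomial k) * ((x - C ((α1 + 2 * α2) / 3)) ^ 2 * (x - C ((4 * α1 - α2) / 3)))
        = (3 * x - 3 * C ((α1 + 2 * α2) / 3)) ^ 2 * (3 * x - 3 * C ((4 * α1 - α2) / 3)) := by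
          ring
      _ = (3 * x - (C α1 + 2 * C α2)) ^ 2 * (3 * x - (4 * C α1 - C α2)) := by rw [hu, hv]
      _ = 27 * ((x - C α1) ^ 2 * (x - C α2)) - 27 * C ((4 / 27) * (α1 - α2) ^ 3) := by
          linear_combination hw
      _ = 27 * ((x - C α1) ^ 2 * (x - C α2) - C ((4 / 27) * (α1 - α2) ^ 3)) := by ring
  rw [hh]
  have : (x - C α1) ^ (2 * k1) = ((x - C α1) ^ 2) ^ k1 := by rw [pow_mul]
  rw [this, ← mul_pow]
  have : (x - C ((α1 + 2 * α2) / 3)) ^ (2 * k2) = ((x - C ((α1 + 2 * α2) / 3)) ^ 2) ^ k2 := by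
    rw [pow_mul]
  rw [mul_assoc, this, ← mul_pow, key]
  ring
end

section
/- Let k be an algebraically closed field of characteristic zero containing i = √(-1), let α3, α4, β2 ∈ k, and let k1, k2 be positive integers. Set α1 = (α4(3 - i√3) - α3(1 - i√3))/2 and α2 = (α4(3 + i√3) - α3(1 + i√3))/2. Then (x-α1)^{k1}(x-α2)^{k1}(x-α3)^{k1}(x-α4)^{3k2} = g(h(x)), where h(x) = β2 + (x-α4)^3 and g(x) = (x - β2 - (α3-α4)^3)^{k1}(x-β2)^{k2}. -/
open Polynomial

/-- Case (1,1,1,3): over an algebraically closed field of characteristic 0, let s be a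
square root of -3 (s = i√3). With α1 = (α4(3-s) - α3(1-s))/2, α2 = (α4(3+s) - α3(1+s))/2,
h(x) = β2 + (x-α4)³ and g(x) = (x-β2-(α3-α4)³)^{k1}(x-β2)^{k2}, one has
(x-α1)^{k1}(x-α2)^{k1}(x-α3)^{k1}(x-α4)^{3k2} = g(h(x)). -/
theorem stmt_16 (k : Type*) [Field k] [CharZero k] [IsAlgClosed k]
    (α3 α4 β2 : k) (s : k) (hs : s ^ 2 = -3)
    (k1 k2 : ℕ) (hk1 : 0 < k1) (hk2 : 0 < k2) :
    let α1 : k := (α4 * (3 - s) - α3 * (1 - s)) / 2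
    let α2 : k := (α4 * (3 + s) - α3 * (1 + s)) / 2
    let x : Polynomial k := X
    let h : Polynomial k := C β2 + (x - C α4) ^ 3
    (x - C α1) ^ k1 * (x - C α2) ^ k1 * (x - C α3) ^ k1 * (x - C α4) ^ (3 * k2) =
      (h - C β2 - C ((α3 - α4) ^ 3)) ^ k1 * (h - C β2) ^ k2 := by
  intro α1 α2 x h
  have e1 : α1 + α2 = 3 * α4 - α3 := by
    show (α4 * (3 - s) - α3 * (1 - s)) / 2 + (α4 * (3 + s) - α3 * (1 + s)) / 2 = _
    field_simp
    ring
  have e2 : α1 * α2 = 3 * α4 ^ 2 - 3 * α3 * α4 + α3 ^ 2 := by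
    show (α4 * (3 - s) - α3 * (1 - s)) / 2 * ((α4 * (3 + s) - α3 * (1 + s)) / 2) = _
    field_simp
    linear_combination (2 * α3 * α4 - α3 ^ 2 - α4 ^ 2) * hs
  have hE1 : (C α1 + C α2 : Polynomial k) = 3 * C α4 - C α3 := by
    rw [← C_add, e1]; simp [C_sub, C_mul, map_ofNat]
  have hE2 : (C α1 * C α2 : Polynomial k) = 3 * C α4 ^ 2 - 3 * C α3 * C α4 + C α3 ^ 2 := by
    rw [← C_mul, e2]; simp [C_add, C_sub, C_mul, C_pow, map_ofNat]
  have key : (X - C α1) * (X - C α2) * (X - C α3) =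
      (X - C α4) ^ 3 - C ((α3 - α4) ^ 3) := by
    rw [C_pow, C_sub]
    linear_combination (C α3 * X - X ^ 2) * hE1 + (X - C α3) * hE2
  show (X - C α1) ^ k1 * (X - C α2) ^ k1 * (X - C α3) ^ k1 * (X - C α4) ^ (3 * k2) =
      (h - C β2 - C ((α3 - α4) ^ 3)) ^ k1 * (h - C β2) ^ k2
  have hh1 : h - C β2 - C ((α3 - α4) ^ 3) = (X - C α4) ^ 3 - C ((α3 - α4) ^ 3) := by
    show C β2 + (X - C α4) ^ 3 - C β2 - _ = _; ring
  have hh2 : h - C β2 = (X - C α4) ^ 3 := by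
    show C β2 + (X - C α4) ^ 3 - C β2 = _; ring
  rw [hh1, hh2, ← key, ← pow_mul, mul_comm 3 k2, pow_mul, ← mul_pow, ← mul_pow]
end
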